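/- arXiv:2208.11580 — 5 statements merged into one kernel-verified Lean document; each statement's English description precedes it below -/
import Mathlib

section
/- Let n ≥ 1, let H be an invertible real (n+1)×(n+1) matrix with inverse K = H⁻¹, and let p be an index such that the diagonal entry K p p is nonzero. Write H₋ₚ for the matrix obtained from H by deleting row p and column p (i.e. H.submatrix p.succAbove p.succAbove). Then H₋ₚ is invertible and its inverse is obtained by deleting row p and column p from the matrix K − (1 / K p p) • (column p of K) ⬝ (row p of K); that is, (H₋ₚ)⁻¹ = (K − (1 / K p p) • fun i j => K i p * K p j) restricted to rows and columns different from p. (One step of Gaussian elimination of row and column p in H⁻¹ followed by dropping them yields the inverse of H with row and column p removed.) -/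
/-!
Let `K = H⁻¹` and let `E` be `K` after eliminating row and column `p` with pivot `K p p`.
Row `p` of `E` vanishes, so deleting the `p`-th column of `H` and the `p`-th row of `E` does not
change `H * E`. On the other hand `H * E = 1 - (1 / K p p) • (column p of 1) ⬝ (row p of K)`,
which agrees with `1` away from row `p`. Hence `H₋ₚ * E₋ₚ = 1`.
-/

open Matrix

namespace Matrix

variable {m o ι R 𝕜 : Type*}

theorem submatrix_mul_of_row_eq_zero [NonUnitalNonAssocSemiring R] {n : ℕ}
    (A : Matrix m (Fin (n + 1)) R) (B : Matrix (Fin (n + 1)) o R) (p : Fin (n + 1))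
    (hB : ∀ j, B p j = 0) {l q : Type*} (r : l → m) (c : q → o) :
    (A * B).submatrix r c = A.submatrix r p.succAbove * B.submatrix p.succAbove c := by
  ext i j
  simp [mul_apply, Fin.sum_univ_succAbove _ p, hB]

section Field

variable [Field 𝕜]

def pivotEliminate (K : Matrix ι ι 𝕜) (p : ι) : Matrix ι ι 𝕜 :=
  K - (1 / K p p) • of (fun i j => K i p * K p j)

theorem pivotEliminate_apply_pivot (K : Matrix ι ι 𝕜) {p : ι} (hp : K p p ≠ 0) (j : ι) :
    pivotEliminate K p p j = 0 := by
  simp [pivotEliminate]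
  field_simp
  ring

theorem mul_pivotEliminate_apply_of_mul_eq_one [Fintype ι] [DecidableEq ι]
    {H K : Matrix ι ι 𝕜} (hHK : H * K = 1) {p i : ι} (hi : i ≠ p) (j : ι) :
    (H * pivotEliminate K p) i j = (1 : Matrix ι ι 𝕜) i j := by
  have mul_outer : H * of (fun i j => K i p * K p j) = of (fun i j => (H * K) i p * K p j) := by
    ext i j
    simp [mul_apply, Finset.sum_mul, mul_assoc]
  rw [pivotEliminate, Matrix.mul_sub, Matrix.mul_smul, mul_outer, hHK]
  simp [hi]

end Field

end Matrix

theorem row_and_column_removal_general (n : ℕ)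
    (H : Matrix (Fin (n + 1)) (Fin (n + 1)) ℝ) (hH : IsUnit H.det)
    (p : Fin (n + 1)) (hp : H⁻¹ p p ≠ 0) :
    IsUnit (H.submatrix p.succAbove p.succAbove).det ∧
      (H.submatrix p.succAbove p.succAbove)⁻¹ =
        (H⁻¹ - (1 / H⁻¹ p p) •
            Matrix.of (fun i j => H⁻¹ i p * H⁻¹ p j)).submatrix
          p.succAbove p.succAbove := by
  have hHK : H * H⁻¹ = 1 := mul_nonsing_inv H hH
  have key : H.submatrix p.succAbove p.succAbove *
      (pivotEliminate H⁻¹ p).submatrix p.succAbove p.succAbove = 1 := by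
    rw [← submatrix_mul_of_row_eq_zero _ _ p (pivotEliminate_apply_pivot _ hp),
      ← submatrix_one _ Fin.succAbove_right_injective]
    ext i j
    exact mul_pivotEliminate_apply_of_mul_eq_one hHK (p.succAbove_ne i) _
  exact ⟨isUnit_det_of_right_inverse key, inv_eq_right_inv key⟩

/-- Row & Column Removal (Lemma 1): if `H` is invertible with inverse `K = H⁻¹` and
`K p p ≠ 0`, then the matrix obtained from `H` by deleting row and column `p` is
invertible, and its inverse is obtained by one step of Gaussian elimination of row
and column `p` in `K`, followed by dropping that row and column. -/
theorem row_and_column_removal (n : ℕ) (hn : 1 ≤ n)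
    (H : Matrix (Fin (n + 1)) (Fin (n + 1)) ℝ) (hH : IsUnit H.det)
    (p : Fin (n + 1)) (hp : H⁻¹ p p ≠ 0) :
    IsUnit (H.submatrix p.succAbove p.succAbove).det ∧
      (H.submatrix p.succAbove p.succAbove)⁻¹ =
        (H⁻¹ - (1 / H⁻¹ p p) •
            Matrix.of (fun i j => H⁻¹ i p * H⁻¹ p j)).submatrix
          p.succAbove p.succAbove :=
  row_and_column_removal_general n H hH p hp
end

section
/- Let H be a symmetric positive definite real n×n matrix, let w : Fin n → ℝ, and let p : Fin n. Then (H⁻¹) p p > 0, and among all vectors δ : Fin n → ℝ satisfying the constraint δ p = −(w p), the quadratic form δ ⬝ᵥ (H *ᵥ δ) is minimized, with minimum value (w p)² / (H⁻¹) p p, and the minimum is attained at the vector δ* := −((w p) / (H⁻¹) p p) • (fun i => (H⁻¹) i p). That is, for every δ with δ p = −(w p) one has δ ⬝ᵥ (H *ᵥ δ) ≥ (w p)² / (H⁻¹) p p, with equality when δ = δ*. -/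
/-!
The column `c = H⁻¹ eₚ` satisfies `H c = eₚ`, so `δ* = a • c` is `H`-orthogonal to every vector
vanishing at `p`. For `δ` with `δ p = δ* p` the form then splits as
`δᵀHδ = δ*ᵀHδ* + (δ - δ*)ᵀH(δ - δ*) ≥ δ*ᵀHδ*`, and `δ*ᵀHδ* = a · δ* p = (w p)² / (H⁻¹) p p`.
Positivity of `(H⁻¹) p p` is that of a diagonal entry of the positive definite `H⁻¹`.
-/

open Matrix

namespace Matrix

variable {ι R : Type*} [Fintype ι]

theorem IsSymm.dotProduct_mulVec_comm [CommSemiring R] {H : Matrix ι ι R} (hH : H.IsSymm)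
    (x y : ι → R) : x ⬝ᵥ (H *ᵥ y) = y ⬝ᵥ (H *ᵥ x) := by
  rw [dotProduct_mulVec, ← mulVec_transpose, hH.eq, dotProduct_comm]

theorem IsSymm.dotProduct_mulVec_add_of_orthogonal [CommSemiring R] {H : Matrix ι ι R}
    (hH : H.IsSymm) {x y : ι → R} (hxy : y ⬝ᵥ (H *ᵥ x) = 0) :
    (x + y) ⬝ᵥ (H *ᵥ (x + y)) = x ⬝ᵥ (H *ᵥ x) + y ⬝ᵥ (H *ᵥ y) := by
  rw [mulVec_add, dotProduct_add, add_dotProduct, add_dotProduct, hH.dotProduct_mulVec_comm x y,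
    hxy, zero_add, add_zero]

theorem mulVec_col_nonsing_inv [CommRing R] [DecidableEq ι] {H : Matrix ι ι R}
    (hH : IsUnit H.det) (p : ι) : H *ᵥ H⁻¹.col p = Pi.single p 1 := by
  rw [← mulVec_single_one, mulVec_mulVec, mul_nonsing_inv H hH, one_mulVec]

theorem PosSemidef.dotProduct_mulVec_le_of_mulVec_eq_single [DecidableEq ι]
    {H : Matrix ι ι ℝ} (hH : H.PosSemidef) {x : ι → ℝ} {p : ι} {c : ℝ}
    (hx : H *ᵥ x = Pi.single p c) {δ : ι → ℝ} (hδ : δ p = x p) :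
    x ⬝ᵥ (H *ᵥ x) ≤ δ ⬝ᵥ (H *ᵥ δ) := by
  have horth : (δ - x) ⬝ᵥ (H *ᵥ x) = 0 := by
    rw [hx, dotProduct_single, Pi.sub_apply, hδ, sub_self, zero_mul]
  have hsymm : H.IsSymm := isHermitian_iff_isSymm.mp hH.isHermitian
  calc x ⬝ᵥ (H *ᵥ x) ≤ x ⬝ᵥ (H *ᵥ x) + (δ - x) ⬝ᵥ (H *ᵥ (δ - x)) :=
        le_add_of_nonneg_right (hH.dotProduct_mulVec_nonneg _)
    _ = δ ⬝ᵥ (H *ᵥ δ) := by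
        rw [← hsymm.dotProduct_mulVec_add_of_orthogonal horth, add_sub_cancel]

end Matrix

/-- The Optimal Brain Surgeon (OBS) single-weight pruning formula: for a symmetric
positive definite Hessian `H`, `(H⁻¹) p p > 0`, and among all updates `δ` with
`δ p = -(w p)`, the quadratic form `δᵀ H δ` is minimized with minimum value
`(w p)² / (H⁻¹) p p`, attained at `δ* = -((w p) / (H⁻¹) p p) • (H⁻¹ column p)`. -/
theorem obs_single_weight_pruning (n : ℕ) (H : Matrix (Fin n) (Fin n) ℝ)
    (hH : H.PosDef) (w : Fin n → ℝ) (p : Fin n) :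
    0 < H⁻¹ p p ∧
      (∀ δ : Fin n → ℝ, δ p = -(w p) →
        (w p) ^ 2 / H⁻¹ p p ≤ δ ⬝ᵥ (H *ᵥ δ)) ∧
      (-((w p) / H⁻¹ p p) • (fun i => H⁻¹ i p)) p = -(w p) ∧
      (-((w p) / H⁻¹ p p) • (fun i => H⁻¹ i p)) ⬝ᵥ
          (H *ᵥ (-((w p) / H⁻¹ p p) • (fun i => H⁻¹ i p))) =
        (w p) ^ 2 / H⁻¹ p p := by
  have hq : 0 < H⁻¹ p p := hH.inv.diag_pos
  set a := -(w p / H⁻¹ p p)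
  have hmin : H *ᵥ (a • H⁻¹.col p) = Pi.single p a := by
    rw [mulVec_smul, mulVec_col_nonsing_inv ((isUnit_iff_isUnit_det H).mp hH.isUnit),
      ← Pi.single_smul', smul_eq_mul, mul_one]
  have hconstr : (a • H⁻¹.col p) p = -(w p) := by
    simp only [Pi.smul_apply, col_apply, smul_eq_mul, a]
    field_simp
  have hval : (a • H⁻¹.col p) ⬝ᵥ (H *ᵥ (a • H⁻¹.col p)) = (w p) ^ 2 / H⁻¹ p p := by
    rw [hmin, dotProduct_single, hconstr]
    simp only [a]
    field_simp
  refine ⟨hq, fun δ hδ => ?_, hconstr, hval⟩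
  rw [← hval]
  exact hH.posSemidef.dotProduct_mulVec_le_of_mulVec_eq_single hmin (hδ.trans hconstr.symm)
end

section
/- Let H be a symmetric positive definite real n×n matrix, let w : Fin n → ℝ, let k ≥ 1 and let ι : Fin k ↪ Fin n be an injection selecting a set P of k indices. Write K := H⁻¹, let K_P := K.submatrix ι ι be the principal submatrix of K on the selected indices, and let w_P := w ∘ ι. Then K_P is positive definite (hence invertible), and among all vectors δ : Fin n → ℝ satisfying δ (ι j) = −(w (ι j)) for all j : Fin k, the quadratic form δ ⬝ᵥ (H *ᵥ δ) is minimized, with minimum value w_P ⬝ᵥ ((K_P)⁻¹ *ᵥ w_P), and the minimum is attained at the vector δ* given by δ* i = −∑ j, K i (ι j) * (((K_P)⁻¹ *ᵥ w_P) j). -/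
/-!
With `K = H⁻¹` and `λ = (K_P)⁻¹ w_P`, the candidate `δ* = -K_{:,P} λ` satisfies `H δ* = -E_P λ`,
where `E_P` embeds `P`-indexed vectors by zero. Hence `yᵀ H δ*` only sees the entries of `y` on
`P`: it equals `-(y_P)ᵀ λ`. This gives `δ*_P = -w_P` and `δ*ᵀ H δ* = w_Pᵀ λ`, and any other
feasible `δ` differs from `δ*` by a vector vanishing on `P`, hence `H`-orthogonal to `δ*`, so
`δᵀ H δ ≥ δ*ᵀ H δ*` by positivity of `H`.
-/

open Matrix

namespace Matrix

variable {m n R : Type*} [Fintype m] [Fintype n]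

theorem PosSemidef.dotProduct_mulVec_le_add [CommRing R] [PartialOrder R] [IsOrderedRing R]
    [StarRing R] [TrivialStar R] {H : Matrix n n R} (hH : H.PosSemidef) {x d : n → R}
    (hdx : d ⬝ᵥ (H *ᵥ x) = 0) :
    x ⬝ᵥ (H *ᵥ x) ≤ (x + d) ⬝ᵥ (H *ᵥ (x + d)) := by
  have hxd : x ⬝ᵥ (H *ᵥ d) = 0 := by
    rw [dotProduct_mulVec, ← mulVec_transpose, ← conjTranspose_eq_transpose_of_trivial,
      hH.isHermitian.eq, dotProduct_comm, hdx]
  have hd : 0 ≤ d ⬝ᵥ (H *ᵥ d) := by simpa using hH.dotProduct_mulVec_nonneg d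
  simp only [mulVec_add, add_dotProduct, dotProduct_add, hxd, hdx]
  simpa using hd

theorem dotProduct_mulVec_submatrix_id_mulVec [CommSemiring R] [DecidableEq n]
    {H K : Matrix n n R} (hHK : H * K = 1) (e : m → n) (y : n → R) (x : m → R) :
    y ⬝ᵥ (H *ᵥ (K.submatrix id e *ᵥ x)) = (y ∘ e) ⬝ᵥ x := by
  have hsub : H * K.submatrix id e = (1 : Matrix n n R).submatrix id e := by
    rw [← hHK]
    rfl
  rw [dotProduct_mulVec, dotProduct_mulVec, vecMul_vecMul, hsub]
  congr 1
  ext j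
  simp [vecMul, dotProduct, one_apply]

section GroupOBS

variable [Field R] [PartialOrder R] [StarRing R] [DecidableEq m] [DecidableEq n]

/-- The paper's `δ_P = -K_{:,P} (K_P)⁻¹ w_P`, for `K = H⁻¹` and `v = w_P`. -/
noncomputable def groupOBSUpdate (K : Matrix n n R) (e : m → n) (v : m → R) : n → R :=
  -(K.submatrix id e *ᵥ ((K.submatrix e e)⁻¹ *ᵥ v))

theorem groupOBSUpdate_comp {H : Matrix n n R} (hH : H.PosDef) {e : m → n}
    (he : Function.Injective e) (v : m → R) : groupOBSUpdate H⁻¹ e v ∘ e = -v := by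
  have hKP : H⁻¹.submatrix e e * (H⁻¹.submatrix e e)⁻¹ = 1 :=
    mul_nonsing_inv _ ((isUnit_iff_isUnit_det _).mp (hH.inv.submatrix he).isUnit)
  change -(H⁻¹.submatrix e e *ᵥ ((H⁻¹.submatrix e e)⁻¹ *ᵥ v)) = -v
  rw [mulVec_mulVec, hKP, one_mulVec]

theorem dotProduct_mulVec_groupOBSUpdate {H : Matrix n n R} (hH : H.PosDef) (e : m → n)
    (v : m → R) (y : n → R) :
    y ⬝ᵥ (H *ᵥ groupOBSUpdate H⁻¹ e v) = -((y ∘ e) ⬝ᵥ ((H⁻¹.submatrix e e)⁻¹ *ᵥ v)) := by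
  rw [groupOBSUpdate, mulVec_neg, dotProduct_neg, dotProduct_mulVec_submatrix_id_mulVec
    (mul_nonsing_inv _ ((isUnit_iff_isUnit_det _).mp hH.isUnit))]

theorem groupOBSUpdate_dotProduct_mulVec {H : Matrix n n R} (hH : H.PosDef) {e : m → n}
    (he : Function.Injective e) (v : m → R) :
    groupOBSUpdate H⁻¹ e v ⬝ᵥ (H *ᵥ groupOBSUpdate H⁻¹ e v) =
      v ⬝ᵥ ((H⁻¹.submatrix e e)⁻¹ *ᵥ v) := by
  rw [dotProduct_mulVec_groupOBSUpdate hH, groupOBSUpdate_comp hH he, neg_dotProduct, neg_neg]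

theorem le_dotProduct_mulVec_of_comp_eq_neg [IsOrderedRing R] [TrivialStar R]
    {H : Matrix n n R} (hH : H.PosDef) {e : m → n} (he : Function.Injective e) {v : m → R}
    {δ : n → R} (hδ : δ ∘ e = -v) :
    v ⬝ᵥ ((H⁻¹.submatrix e e)⁻¹ *ᵥ v) ≤ δ ⬝ᵥ (H *ᵥ δ) := by
  set δstar := groupOBSUpdate H⁻¹ e v
  have hd : (δ - δstar) ∘ e = 0 := by
    rw [Pi.sub_comp, hδ, groupOBSUpdate_comp hH he, sub_self]
  have horth : (δ - δstar) ⬝ᵥ (H *ᵥ δstar) = 0 := by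
    rw [dotProduct_mulVec_groupOBSUpdate hH, hd, zero_dotProduct, neg_zero]
  calc v ⬝ᵥ ((H⁻¹.submatrix e e)⁻¹ *ᵥ v) = δstar ⬝ᵥ (H *ᵥ δstar) :=
        (groupOBSUpdate_dotProduct_mulVec hH he v).symm
    _ ≤ (δstar + (δ - δstar)) ⬝ᵥ (H *ᵥ (δstar + (δ - δstar))) :=
        hH.posSemidef.dotProduct_mulVec_le_add horth
    _ = δ ⬝ᵥ (H *ᵥ δ) := by rw [add_sub_cancel]

end GroupOBS

end Matrix

theorem group_obs_pruning_general (n k : ℕ)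
    (H : Matrix (Fin n) (Fin n) ℝ) (hH : H.PosDef)
    (w : Fin n → ℝ) (ι : Fin k ↪ Fin n) :
    ((H⁻¹).submatrix ι ι).PosDef ∧
      (∀ δ : Fin n → ℝ, (∀ j : Fin k, δ (ι j) = -(w (ι j))) →
        (w ∘ ι) ⬝ᵥ (((H⁻¹).submatrix ι ι)⁻¹ *ᵥ (w ∘ ι)) ≤ δ ⬝ᵥ (H *ᵥ δ)) ∧
      (∀ j : Fin k,
        (fun i => -∑ j', H⁻¹ i (ι j') * ((((H⁻¹).submatrix ι ι)⁻¹ *ᵥ (w ∘ ι)) j'))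
            (ι j) = -(w (ι j))) ∧
      (fun i => -∑ j', H⁻¹ i (ι j') * ((((H⁻¹).submatrix ι ι)⁻¹ *ᵥ (w ∘ ι)) j')) ⬝ᵥ
          (H *ᵥ
            (fun i => -∑ j', H⁻¹ i (ι j') * ((((H⁻¹).submatrix ι ι)⁻¹ *ᵥ (w ∘ ι)) j'))) =
        (w ∘ ι) ⬝ᵥ (((H⁻¹).submatrix ι ι)⁻¹ *ᵥ (w ∘ ι)) :=
  ⟨hH.inv.submatrix ι.injective,
    fun _ hδ => le_dotProduct_mulVec_of_comp_eq_neg hH ι.injective (funext hδ),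
    fun j => congrFun (groupOBSUpdate_comp hH ι.injective (w ∘ ι)) j,
    groupOBSUpdate_dotProduct_mulVec hH ι.injective (w ∘ ι)⟩

/-- The group OBS formula for pruning a block `P` of `k` weights simultaneously:
with `K = H⁻¹` and `K_P` the principal submatrix of `K` on the selected indices,
`K_P` is positive definite, and among all updates `δ` zeroing out the weights in
`P`, the quadratic form `δᵀ H δ` is minimized with minimum value
`w_Pᵀ (K_P)⁻¹ w_P`, attained at `δ*_i = -∑ j, K i (ι j) * ((K_P)⁻¹ w_P) j`. -/
theorem group_obs_pruning (n k : ℕ) (hk : 1 ≤ k)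
    (H : Matrix (Fin n) (Fin n) ℝ) (hH : H.PosDef)
    (w : Fin n → ℝ) (ι : Fin k ↪ Fin n) :
    ((H⁻¹).submatrix ι ι).PosDef ∧
      (∀ δ : Fin n → ℝ, (∀ j : Fin k, δ (ι j) = -(w (ι j))) →
        (w ∘ ι) ⬝ᵥ (((H⁻¹).submatrix ι ι)⁻¹ *ᵥ (w ∘ ι)) ≤ δ ⬝ᵥ (H *ᵥ δ)) ∧
      (∀ j : Fin k,
        (fun i => -∑ j', H⁻¹ i (ι j') * ((((H⁻¹).submatrix ι ι)⁻¹ *ᵥ (w ∘ ι)) j'))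
            (ι j) = -(w (ι j))) ∧
      (fun i => -∑ j', H⁻¹ i (ι j') * ((((H⁻¹).submatrix ι ι)⁻¹ *ᵥ (w ∘ ι)) j')) ⬝ᵥ
          (H *ᵥ
            (fun i => -∑ j', H⁻¹ i (ι j') * ((((H⁻¹).submatrix ι ι)⁻¹ *ᵥ (w ∘ ι)) j'))) =
        (w ∘ ι) ⬝ᵥ (((H⁻¹).submatrix ι ι)⁻¹ *ᵥ (w ∘ ι)) :=
  group_obs_pruning_general n k H hH w ι
end

section
/- Let X be a real d×N matrix such that A := X * Xᵀ is positive definite, let w : Fin d → ℝ and p : Fin d. Then among all vectors ŵ : Fin d → ℝ with ŵ p = 0, the layer-wise squared error ∑ j : Fin N, (∑ i, ŵ i * X i j − ∑ i, w i * X i j)² is minimized, with minimum value (w p)² / (A⁻¹) p p, and the minimum is attained at ŵ* := w − ((w p) / (A⁻¹) p p) • (fun i => (A⁻¹) i p). That is, greedily pruning a single weight p with the OBS update yields exactly the optimal compressed row subject to the sparsity constraint ŵ p = 0. -/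
/-!
The layer-wise error of `ŵ` is the quadratic form `δᵀ A δ` of `δ = ŵ - w` with `A = XXᵀ`, and
the constraint `ŵ p = 0` fixes `δ p = -w p`. Writing `c` for the `p`-th column of `A⁻¹`, we have
`A c = e_p`, so `δᵀ A c = δ p` and `cᵀ A c = (A⁻¹) p p`. Expanding `0 ≤ (δ - s c)ᵀ A (δ - s c)`
with `s = δ p / (A⁻¹) p p` gives `δᵀ A δ ≥ (δ p)² / (A⁻¹) p p`, with equality at `δ = -s c`,
which is the OBS update.
-/

open Matrix

namespace Matrix

theorem sum_sq_sub_sum_mul_eq_dotProduct_mulVec {m n : Type*} [Fintype m] [Fintype n]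
    (X : Matrix m n ℝ) (u v : m → ℝ) :
    ∑ j, (∑ i, u i * X i j - ∑ i, v i * X i j) ^ 2 = (u - v) ⬝ᵥ ((X * Xᵀ) *ᵥ (u - v)) := by
  rw [← mulVec_mulVec, dotProduct_mulVec, mulVec_transpose, dotProduct, sub_vecMul]
  simp only [vecMul, dotProduct, Pi.sub_apply, sq]

section Invertible

variable {m : Type*} [Fintype m] [DecidableEq m] {A : Matrix m m ℝ}

theorem dotProduct_mulVec_inv_col (hA : IsUnit A.det) (u : m → ℝ) (p : m) :
    u ⬝ᵥ (A *ᵥ A⁻¹.col p) = u p := by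
  rw [← mulVec_single_one, mulVec_mulVec, mul_nonsing_inv A hA, one_mulVec, dotProduct_single_one]

theorem dotProduct_mulVec_smul_inv_col (hA : IsUnit A.det) (t : ℝ) (p : m) :
    (t • A⁻¹.col p) ⬝ᵥ (A *ᵥ (t • A⁻¹.col p)) = t ^ 2 * A⁻¹ p p := by
  rw [mulVec_smul, dotProduct_smul, smul_dotProduct, dotProduct_mulVec_inv_col hA,
    smul_eq_mul, smul_eq_mul, col_apply]
  ring

theorem PosDef.sq_apply_div_inv_apply_le (hA : A.PosDef) (δ : m → ℝ) (p : m) :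
    δ p ^ 2 / A⁻¹ p p ≤ δ ⬝ᵥ (A *ᵥ δ) := by
  have hdet : IsUnit A.det := hA.isUnit.map detMonoidHom
  have hα : 0 < A⁻¹ p p := hA.inv.diag_pos
  have hcol : A⁻¹.col p ⬝ᵥ (A *ᵥ δ) = δ p := by
    rw [dotProduct_mulVec, ← mulVec_transpose, ← conjTranspose_eq_transpose_of_trivial,
      hA.isHermitian.eq, dotProduct_comm, dotProduct_mulVec_inv_col hdet]
  set s := δ p / A⁻¹ p p
  have hquad : 0 ≤ (δ - s • A⁻¹.col p) ⬝ᵥ (A *ᵥ (δ - s • A⁻¹.col p)) :=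
    hA.posSemidef.dotProduct_mulVec_nonneg _
  rw [mulVec_sub, dotProduct_sub, sub_dotProduct, sub_dotProduct,
    dotProduct_mulVec_smul_inv_col hdet, mulVec_smul, dotProduct_smul, smul_dotProduct, hcol,
    dotProduct_mulVec_inv_col hdet, smul_eq_mul] at hquad
  have hs : s ^ 2 * A⁻¹ p p = s * δ p := by rw [sq, mul_assoc, div_mul_cancel₀ _ hα.ne']
  have hsq : δ p ^ 2 / A⁻¹ p p = s * δ p := by rw [sq, mul_div_right_comm]
  linarith

end Invertible

end Matrix

/-- Greedy single-weight pruning with the exact OBS update is optimal for the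
layer-wise compression problem: with `A = XXᵀ` positive definite, among all rows
`wComp` with `wComp p = 0`, the layer-wise squared error is minimized with minimum
value `(w p)² / (A⁻¹) p p`, attained at
`wComp* = w − ((w p) / (A⁻¹) p p) • (A⁻¹ column p)`. -/
theorem obs_layerwise_pruning_optimal (d N : ℕ)
    (X : Matrix (Fin d) (Fin N) ℝ) (hX : (X * Xᵀ).PosDef)
    (w : Fin d → ℝ) (p : Fin d) :
    (∀ wComp : Fin d → ℝ, wComp p = 0 →
        (w p) ^ 2 / (X * Xᵀ)⁻¹ p p ≤
          ∑ j : Fin N, (∑ i, wComp i * X i j - ∑ i, w i * X i j) ^ 2) ∧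
      (w - ((w p) / (X * Xᵀ)⁻¹ p p) • (fun i => (X * Xᵀ)⁻¹ i p)) p = 0 ∧
      ∑ j : Fin N,
          (∑ i, (w - ((w p) / (X * Xᵀ)⁻¹ p p) • (fun i => (X * Xᵀ)⁻¹ i p)) i * X i j -
            ∑ i, w i * X i j) ^ 2 =
        (w p) ^ 2 / (X * Xᵀ)⁻¹ p p := by
  have hα : 0 < (X * Xᵀ)⁻¹ p p := hX.inv.diag_pos
  refine ⟨fun wComp hwComp => ?_, ?_, ?_⟩
  · rw [sum_sq_sub_sum_mul_eq_dotProduct_mulVec]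
    simpa [hwComp] using hX.sq_apply_div_inv_apply_le (wComp - w) p
  · simp [div_mul_cancel₀ _ hα.ne']
  · have hδ : w - ((w p) / (X * Xᵀ)⁻¹ p p) • (fun i => (X * Xᵀ)⁻¹ i p) - w =
        (-(w p / (X * Xᵀ)⁻¹ p p)) • (X * Xᵀ)⁻¹.col p := by
      rw [sub_sub_cancel_left, neg_smul]
      rfl
    rw [sum_sq_sub_sum_mul_eq_dotProduct_mulVec, hδ,
      dotProduct_mulVec_smul_inv_col (hX.isUnit.map detMonoidHom)]
    field_simp
end

section
/- Let X be a real d×N matrix such that A := X * Xᵀ is positive definite, let w : Fin d → ℝ, p : Fin d, and let q ∈ ℝ. Then among all vectors ŵ : Fin d → ℝ with ŵ p = q, the layer-wise squared error ∑ j : Fin N, (∑ i, ŵ i * X i j − ∑ i, w i * X i j)² is minimized, with minimum value (q − w p)² / (A⁻¹) p p, and the minimum is attained at ŵ* := w − (((w p) − q) / (A⁻¹) p p) • (fun i => (A⁻¹) i p). That is, quantizing a single weight p to the value q with the OBQ update yields exactly the optimal compressed row subject to the constraint ŵ p = q. -/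
/-! With `δ = ŵ - w` and `A = X Xᵀ`, the error of `ŵ` is the quadratic form `δ ⬝ᵥ A *ᵥ δ`, and the
column `u` of `A⁻¹` at `p` satisfies `δ ⬝ᵥ A *ᵥ u = δ p` and `u ⬝ᵥ A *ᵥ u = A⁻¹ p p`. Cauchy–Schwarz
for the form `A` then gives `(δ p)² ≤ (δ ⬝ᵥ A *ᵥ δ) * A⁻¹ p p`, with equality when `δ` is a
multiple of `u`; the constraint `δ p = q - w p` fixes that multiple. -/

open Matrix

namespace Matrix

variable {n : Type*} [Fintype n]

theorem dotProduct_mul_transpose_self_mulVec {m R : Type*} [Fintype m] [CommSemiring R]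
    (X : Matrix n m R) (v : n → R) :
    v ⬝ᵥ (X * Xᵀ) *ᵥ v = (v ᵥ* X) ⬝ᵥ (v ᵥ* X) := by
  rw [← mulVec_mulVec, dotProduct_mulVec, mulVec_transpose]

theorem sum_sq_sum_mul_sub_sum_mul {m R : Type*} [Fintype m] [CommRing R]
    (X : Matrix n m R) (a b : n → R) :
    ∑ j, (∑ i, a i * X i j - ∑ i, b i * X i j) ^ 2 = (a - b) ⬝ᵥ (X * Xᵀ) *ᵥ (a - b) := by
  rw [dotProduct_mul_transpose_self_mulVec]
  simp only [dotProduct, vecMul, Pi.sub_apply, sub_mul, Finset.sum_sub_distrib, sq]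

theorem PosSemidef.dotProduct_mulVec_sq_div_le {A : Matrix n n ℝ} (hA : A.PosSemidef)
    (u v : n → ℝ) : (v ⬝ᵥ A *ᵥ u) ^ 2 / (u ⬝ᵥ A *ᵥ u) ≤ v ⬝ᵥ A *ᵥ v := by
  have hv : 0 ≤ v ⬝ᵥ A *ᵥ v := by simpa using hA.dotProduct_mulVec_nonneg v
  have hu_nonneg : 0 ≤ u ⬝ᵥ A *ᵥ u := by simpa using hA.dotProduct_mulVec_nonneg u
  rcases hu_nonneg.eq_or_lt with hu0 | hu
  · simpa [← hu0] using hv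
  have hsymm : u ⬝ᵥ A *ᵥ v = v ⬝ᵥ A *ᵥ u := by
    rw [← dotProduct_transpose_mulVec, ← conjTranspose_eq_transpose_of_trivial, hA.isHermitian.eq]
  set t := (v ⬝ᵥ A *ᵥ u) / (u ⬝ᵥ A *ᵥ u)
  have hnonneg : 0 ≤ (v - t • u) ⬝ᵥ A *ᵥ (v - t • u) := by
    simpa using hA.dotProduct_mulVec_nonneg (v - t • u)
  simp only [mulVec_sub, mulVec_smul, dotProduct_sub, sub_dotProduct, dotProduct_smul,
    smul_dotProduct, smul_eq_mul, hsymm] at hnonneg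
  have ht : t * (u ⬝ᵥ A *ᵥ u) = v ⬝ᵥ A *ᵥ u := div_mul_cancel₀ _ hu.ne'
  rw [ht, sub_self, mul_zero, sub_zero] at hnonneg
  rw [div_le_iff₀ hu]
  calc (v ⬝ᵥ A *ᵥ u) ^ 2 = t * (u ⬝ᵥ A *ᵥ u) * (v ⬝ᵥ A *ᵥ u) := by rw [ht, sq]
    _ ≤ v ⬝ᵥ A *ᵥ v * (u ⬝ᵥ A *ᵥ u) := by nlinarith [mul_nonneg hnonneg hu.le]

theorem mulVec_col_nonsing_inv_s9 [DecidableEq n] {K : Type*} [CommRing K] {A : Matrix n n K}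
    (h : IsUnit A.det) (p : n) : A *ᵥ A⁻¹.col p = Pi.single p 1 := by
  rw [← mulVec_single_one, mulVec_mulVec, mul_nonsing_inv _ h, one_mulVec]

end Matrix

/-- Single-weight quantization with the exact OBQ update is optimal for the
layer-wise compression problem: with `A = XXᵀ` positive definite, among all rows
`wComp` with `wComp p = q`, the layer-wise squared error is minimized with minimum
value `(q − w p)² / (A⁻¹) p p`, attained at
`wComp* = w − (((w p) − q) / (A⁻¹) p p) • (A⁻¹ column p)`. -/
theorem obq_layerwise_quantization_optimal (d N : ℕ)
    (X : Matrix (Fin d) (Fin N) ℝ) (hX : (X * Xᵀ).PosDef)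
    (w : Fin d → ℝ) (p : Fin d) (q : ℝ) :
    (∀ wComp : Fin d → ℝ, wComp p = q →
        (q - w p) ^ 2 / (X * Xᵀ)⁻¹ p p ≤
          ∑ j : Fin N, (∑ i, wComp i * X i j - ∑ i, w i * X i j) ^ 2) ∧
      (w - ((w p - q) / (X * Xᵀ)⁻¹ p p) • (fun i => (X * Xᵀ)⁻¹ i p)) p = q ∧
      ∑ j : Fin N,
          (∑ i, (w - ((w p - q) / (X * Xᵀ)⁻¹ p p) • (fun i => (X * Xᵀ)⁻¹ i p)) i * X i j -
            ∑ i, w i * X i j) ^ 2 =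
        (q - w p) ^ 2 / (X * Xᵀ)⁻¹ p p := by
  set A := X * Xᵀ
  have hB : 0 < A⁻¹ p p := hX.inv.diag_pos
  have hcol (v : Fin d → ℝ) : v ⬝ᵥ A *ᵥ A⁻¹.col p = v p := by
    rw [mulVec_col_nonsing_inv_s9 ((isUnit_iff_isUnit_det A).mp hX.isUnit), dotProduct_single_one]
  have hquad : A⁻¹.col p ⬝ᵥ A *ᵥ A⁻¹.col p = A⁻¹ p p := hcol _
  refine ⟨fun wComp hp => ?_, ?_, ?_⟩
  · rw [sum_sq_sum_mul_sub_sum_mul]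
    simpa [hcol, hquad, hp] using hX.posSemidef.dotProduct_mulVec_sq_div_le (A⁻¹.col p) (wComp - w)
  · simp [hB.ne']
  · rw [sum_sq_sum_mul_sub_sum_mul, sub_sub_cancel_left]
    change -(_ • A⁻¹.col p) ⬝ᵥ A *ᵥ -(_ • A⁻¹.col p) = _
    simp only [mulVec_neg, neg_dotProduct, dotProduct_neg, mulVec_smul, smul_dotProduct,
      dotProduct_smul, hquad, smul_eq_mul]
    field_simp
    ring
end
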